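/- Let K be a category with all products. Suppose for every pair of objects K, K' of K with K' not strict initial there exists a morphism K → K'. Let L be a full subcategory of K closed under products, subobjects, and quotients f : A → B for which every morphism from a λ-presentable object into B factors through f (λ-pure quotients), where K is locally λ-presentable. Then for any λ-directed diagram (K_i) in K with all K_i in L and no K_i strict initial, its colimit K lies in L; concretely, there exists a subobject A of ∏_i K_i and a λ-pure epimorphism A → K. -/

import Mathlib

/-!
Put `A j := D j ⨯ ∏_{k ≱ j} D k`. Reading the coordinates `k ≥ j` off `D j` through
`D (j ≤ k)` gives a monomorphism `A j ⟶ ∏ D`; these form a cocone over `j ↦ A j`, and so do the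
projections `A j ⟶ D j ⟶ colim D`. For `A := colim A j` the induced `A ⟶ colim D` is κ-pure,
since a map from a κ-presentable object to `colim D` factors through some `D j`, and `D j` maps
to `A j` over `D j` because no `D k` is strict initial. The induced `A ⟶ ∏ D` is a κ-directed
colimit of monomorphisms, hence mono once the κ-presentable generators are known to separate.
-/

open CategoryTheory CategoryTheory.Limits

universe v u

variable {C : Type u} [Category.{v} C]

/-- A small category `J` is `κ`-filtered if every diagram in `J` of size `< κ`
admits a cocone. -/
def IsCardFiltered (κ : Cardinal.{v}) (J : Type v) [SmallCategory J] : Prop :=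
  ∀ (K : Type v) [SmallCategory K],
    Cardinal.mk (Σ a b : K, a ⟶ b) < κ → ∀ F : K ⥤ J, Nonempty (Cocone F)

/-- An object `X` is `κ`-presentable if its covariant hom-functor preserves colimits of
`κ`-filtered diagrams. -/
def IsCardPresentable (κ : Cardinal.{v}) (X : C) : Prop :=
  ∀ (J : Type v) [SmallCategory J], IsCardFiltered κ J →
    Nonempty (PreservesColimitsOfShape J (coyoneda.obj (Opposite.op X)))

/-- A category is locally `κ`-presentable if it is cocomplete and has a small strong
generator (detecting family) consisting of `κ`-presentable objects. -/
def IsLocallyPresentable (κ : Cardinal.{v}) (C : Type u) [Category.{v} C] : Prop :=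
  HasColimitsOfSize.{v, v} C ∧
    ∃ S : Set C, Small.{v} S ∧ ObjectProperty.IsDetecting (fun X => X ∈ S) ∧ ∀ X ∈ S, IsCardPresentable κ X

/-- A morphism `f : A ⟶ B` is a `κ`-pure epimorphism if every `κ`-presentable object is
projective with respect to it: every morphism from a `κ`-presentable object to `B`
factors through `f`. -/
def IsPureEpi (κ : Cardinal.{v}) {A B : C} (f : A ⟶ B) : Prop :=
  ∀ X : C, IsCardPresentable κ X → ∀ g : X ⟶ B, ∃ h : X ⟶ A, h ≫ f = g

/-- An object is strict initial if it is initial and every morphism into it is an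
isomorphism. -/
def IsStrictInitial (X : C) : Prop :=
  Nonempty (IsInitial X) ∧ ∀ (Y : C) (f : Y ⟶ X), IsIso f

theorem IsCardPresentable.exists_comp_ι_eq {κ : Cardinal.{v}} {X : C}
    (hX : IsCardPresentable κ X) {J : Type v} [SmallCategory J] (hJ : IsCardFiltered κ J)
    (F : J ⥤ C) [HasColimit F] (g : X ⟶ colimit F) :
    ∃ j, ∃ y : X ⟶ F.obj j, y ≫ colimit.ι F j = g :=
  have := (hX J hJ).some
  exists_hom_of_preservesColimit_coyoneda (colimit.isColimit F) g

lemma mk_le_mk_arrows (K : Type v) [SmallCategory K] :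
    Cardinal.mk K ≤ Cardinal.mk (Σ a b : K, a ⟶ b) :=
  Cardinal.mk_le_of_injective (f := fun a => (⟨a, a, 𝟙 a⟩ : Σ a b : K, a ⟶ b))
    fun _ _ h => congrArg Sigma.fst h

/- Without equalizers in `C`, detecting does not formally imply separating. Instead, every `W`
is the colimit of the small κ-filtered category of presentations over `W`, built from the
generators by κ-small coproducts and coequalizers (`isIso_desc_coconeHom`), and a pair of maps
out of `W` equalized on generators is equalized on every presentation (`hom_comp_eq_hom_comp`). -/
section Presentations

variable [HasColimitsOfSize.{v, v} C]

/-- Shapes of objects built from generators `I` by coproducts and coequalizers. Coproducts are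
indexed by subsets of `U`, so that the type of shapes is small; the realization of a shape
depends on parameters, namely the parallel pairs that its coequalizers are taken of. -/
inductive ColimShape (I U : Type v) : Type v
  | gen (i : I)
  | sigma (s : Set U) (f : s → ColimShape I U)
  | coeq (a b : ColimShape I U)

namespace ColimShape

variable {I U : Type v} (G : I → C)

noncomputable def realize : ColimShape I U → Σ' (Param : Type v), Param → C
  | gen i => ⟨PUnit, fun _ => G i⟩
  | sigma _ f => ⟨∀ x, (realize (f x)).1, fun p => ∐ fun x => (realize (f x)).2 (p x)⟩
  | coeq a b => ⟨Σ' (pa : (realize a).1) (pb : (realize b).1),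
      ((realize a).2 pa ⟶ (realize b).2 pb) × ((realize a).2 pa ⟶ (realize b).2 pb),
      fun p => coequalizer p.2.2.1 p.2.2.2⟩
  termination_by structural t => t

end ColimShape

structure Presentation {I : Type v} (G : I → C) (U : Type v) (W : C) : Type v where
  shape : ColimShape I U
  param : (shape.realize G).1
  hom : (shape.realize G).2 param ⟶ W

namespace Presentation

variable {I : Type v} {G : I → C} {U : Type v} {W : C}

noncomputable abbrev obj (z : Presentation G U W) : C := (z.shape.realize G).2 z.param

noncomputable instance : SmallCategory (Presentation G U W) where
  Hom z z' := {φ : z.obj ⟶ z'.obj // φ ≫ z'.hom = z.hom}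
  id z := ⟨𝟙 _, Category.id_comp _⟩
  comp f g := ⟨f.1 ≫ g.1, by rw [Category.assoc, g.2, f.2]⟩

variable (G U W) in
noncomputable def forget : Presentation G U W ⥤ C where
  obj := obj
  map f := f.1

variable (G U W) in
noncomputable abbrev coconeHom : Cocone (forget G U W) where
  pt := W
  ι := { app := hom, naturality := fun _ _ f => by simpa [forget] using f.2 }

noncomputable abbrev gen (i : I) (f : G i ⟶ W) : Presentation G U W := ⟨.gen i, PUnit.unit, f⟩

theorem hom_comp_eq_hom_comp {Z : C} {u v : W ⟶ Z} (h : ∀ i (f : G i ⟶ W), f ≫ u = f ≫ v)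
    (z : Presentation G U W) : z.hom ≫ u = z.hom ≫ v := by
  obtain ⟨t, p, k⟩ := z
  dsimp only
  induction t with
  | gen i => exact h i k
  | sigma s f ih =>
    refine Sigma.hom_ext _ _ fun x => ?_
    exact (Category.assoc _ _ _).symm.trans ((ih x (p x) _).trans (Category.assoc _ _ _))
  | coeq a b _ ihb =>
    refine coequalizer.hom_ext ?_
    exact (Category.assoc _ _ _).symm.trans ((ihb p.2.1 _).trans (Category.assoc _ _ _))

section Colimits

variable {T : Type v} (e : T ↪ U) (Z : T → Presentation G U W)

noncomputable def sigma : Presentation G U W where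
  shape := .sigma (Set.range e) fun o => (Z ((Equiv.ofInjective e e.injective).symm o)).shape
  param _ := (Z _).param
  hom := Sigma.desc fun o => (Z ((Equiv.ofInjective e e.injective).symm o)).hom

noncomputable def sigmaι (a : T) : Z a ⟶ sigma e Z :=
  ⟨eqToHom (congrArg (fun b => (Z b).obj) (Equiv.ofInjective_symm_apply e.injective a).symm) ≫
      Sigma.ι (fun o => (Z ((Equiv.ofInjective e e.injective).symm o)).obj) ⟨e a, a, rfl⟩, by
    erw [Category.assoc, Sigma.ι_desc]
    simpa using
      (dcongr_arg (fun b => (Z b).hom) (Equiv.ofInjective_symm_apply e.injective a).symm).symm⟩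

noncomputable def sigmaDesc {Y : Presentation G U W} (φ : ∀ a, Z a ⟶ Y) : sigma e Z ⟶ Y :=
  ⟨Sigma.desc fun o => (φ _).1, Sigma.hom_ext _ _ fun o => by
    erw [← Category.assoc, Sigma.ι_desc, Sigma.ι_desc]
    exact (φ _).2⟩

lemma sigmaι_sigmaDesc {Y : Presentation G U W} (φ : ∀ a, Z a ⟶ Y) (a : T) :
    sigmaι e Z a ≫ sigmaDesc e Z φ = φ a := by
  refine Subtype.ext ?_
  change (_ ≫ _) ≫ _ = _
  erw [Category.assoc, Sigma.ι_desc]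
  simpa using
    (dcongr_arg (fun b => (φ b).1) (Equiv.ofInjective_symm_apply e.injective a).symm).symm

variable {x y : Presentation G U W} (f g : x ⟶ y)

noncomputable def coeq : Presentation G U W where
  shape := .coeq x.shape y.shape
  param := ⟨x.param, y.param, f.1, g.1⟩
  hom := coequalizer.desc y.hom (by rw [f.2, g.2])

noncomputable def coeqπ : y ⟶ coeq f g := ⟨coequalizer.π _ _, coequalizer.π_desc _ _⟩

lemma coeq_condition : f ≫ coeqπ f g = g ≫ coeqπ f g :=
  Subtype.ext (coequalizer.condition f.1 g.1)

end Colimits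

theorem nonempty_cocone {K : Type v} [SmallCategory K] (F : K ⥤ Presentation G U W)
    (eo : K ↪ U) (em : (Σ a b : K, a ⟶ b) ↪ U) : Nonempty (Cocone F) := by
  let ι := sigmaι eo F.obj
  let s := sigmaDesc em (fun t => F.obj t.1) fun t => F.map t.2.2 ≫ ι t.2.1
  let t := sigmaDesc em (fun t => F.obj t.1) fun t => ι t.1
  refine ⟨⟨coeq s t, fun a => ι a ≫ coeqπ s t, fun a b f => ?_⟩⟩
  have hs : sigmaι em _ ⟨a, b, f⟩ ≫ s = F.map f ≫ ι b := sigmaι_sigmaDesc ..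
  have ht : sigmaι em _ ⟨a, b, f⟩ ≫ t = ι a := sigmaι_sigmaDesc ..
  change F.map f ≫ ι b ≫ coeqπ s t = (ι a ≫ coeqπ s t) ≫ 𝟙 _
  rw [Category.comp_id, ← ht, ← reassoc_of% hs, Category.assoc, coeq_condition]

theorem isCardFiltered {κ : Cardinal.{v}} (hU : κ ≤ Cardinal.mk U) :
    IsCardFiltered κ (Presentation G U W) := by
  have hemb : ∀ T : Type v, Cardinal.mk T < κ → Nonempty (T ↪ U) := fun T hT =>
    Cardinal.le_def _ _ |>.1 (hT.le.trans hU)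
  intro K _ hK F
  exact nonempty_cocone F (hemb _ ((mk_le_mk_arrows K).trans_lt hK)).some (hemb _ hK).some

theorem isIso_desc_coconeHom {κ : Cardinal.{v}} (hU : κ ≤ Cardinal.mk U)
    (hG : ∀ i, IsCardPresentable κ (G i)) (hdet : (ObjectProperty.ofObj G).IsDetecting) :
    IsIso (colimit.desc (forget G U W) (coconeHom G U W)) := by
  refine hdet _ ?_
  rintro _ ⟨i⟩ f
  refine ⟨colimit.ι (forget G U W) (gen i f), colimit.ι_desc (coconeHom G U W) _, fun l hl => ?_⟩
  obtain ⟨z, y, rfl⟩ := (hG i).exists_comp_ι_eq (isCardFiltered hU) _ l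
  have hy : y ≫ z.hom = f := by simpa [coconeHom] using hl
  -- `y` is itself a morphism `gen i f ⟶ z` of the diagram
  exact colimit.w (forget G U W) (⟨y, hy⟩ : gen i f ⟶ z)

end Presentation

theorem isSeparating_ofObj_of_isDetecting (κ : Cardinal.{v}) {I : Type v} (G : I → C)
    (hG : ∀ i, IsCardPresentable κ (G i)) (hdet : (ObjectProperty.ofObj G).IsDetecting) :
    (ObjectProperty.ofObj G).IsSeparating := by
  intro W Z u v h
  obtain ⟨U, hU⟩ : ∃ U : Type v, κ ≤ Cardinal.mk U := ⟨κ.out, (Cardinal.mk_out κ).ge⟩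
  have := Presentation.isIso_desc_coconeHom hU hG hdet (W := W)
  refine (cancel_epi (colimit.desc _ (Presentation.coconeHom G U W))).1
    (colimit.hom_ext fun z => ?_)
  rw [colimit.ι_desc_assoc, colimit.ι_desc_assoc]
  exact Presentation.hom_comp_eq_hom_comp (fun i f => h _ ⟨i⟩ f) z

end Presentations

theorem IsLocallyPresentable.exists_isSeparating {κ : Cardinal.{v}}
    (hC : IsLocallyPresentable κ C) :
    ∃ P : ObjectProperty C, P.IsSeparating ∧ ∀ X, P X → IsCardPresentable κ X := by
  have := hC.1
  obtain ⟨S, _, hdet, hpres⟩ := hC.2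
  let G : Shrink S → C := fun i => ((equivShrink S).symm i : C)
  have hGS : ObjectProperty.ofObj G ≤ (· ∈ S) := by
    rintro _ ⟨i⟩
    exact ((equivShrink S).symm i).2
  have hSG : (· ∈ S) ≤ ObjectProperty.ofObj G := fun X hX => by
    simpa [G] using ObjectProperty.ofObj_apply G (equivShrink S ⟨X, hX⟩)
  exact ⟨_, isSeparating_ofObj_of_isDetecting κ G (fun i => hpres _ (hGS _ ⟨i⟩)) (hdet.of_le hSG),
    fun X hX => hpres X (hGS X hX)⟩

theorem isCardFiltered_of_forall_bddAbove {κ : Cardinal.{v}} {J : Type v} [Preorder J]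
    (hdir : ∀ S : Set J, Cardinal.mk S < κ → ∃ j, ∀ i ∈ S, i ≤ j) : IsCardFiltered κ J := by
  intro K _ hK F
  obtain ⟨j, hj⟩ := hdir _ ((Cardinal.mk_range_le.trans (mk_le_mk_arrows K)).trans_lt hK)
  exact ⟨⟨j, ⟨fun a => homOfLE (hj _ ⟨a, rfl⟩), fun _ _ _ => Subsingleton.elim _ _⟩⟩⟩

theorem isFiltered_of_forall_bddAbove {κ : Cardinal.{v}} (hκ : Cardinal.aleph0 ≤ κ)
    {J : Type v} [Preorder J] (hdir : ∀ S : Set J, Cardinal.mk S < κ → ∃ j, ∀ i ∈ S, i ≤ j) :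
    IsFiltered J := by
  have : IsDirected J (· ≤ ·) := ⟨fun a b => by
    obtain ⟨j, hj⟩ := hdir {a, b} ((Set.toFinite _).lt_aleph0.trans_le hκ)
    exact ⟨j, hj a (by simp), hj b (by simp)⟩⟩
  obtain ⟨j, -⟩ := hdir ∅ (by simpa using Cardinal.aleph0_pos.trans_le hκ)
  have : Nonempty J := ⟨j⟩
  infer_instance

theorem isPureEpi_of_forall_exists_comp_eq {κ : Cardinal.{v}} {J : Type v} [SmallCategory J]
    (hJ : IsCardFiltered κ J) (F : J ⥤ C) [HasColimit F] {Y : C} (p : Y ⟶ colimit F)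
    (hp : ∀ j, ∃ s : F.obj j ⟶ Y, s ≫ p = colimit.ι F j) : IsPureEpi κ p := by
  intro X hX g
  obtain ⟨j, y, rfl⟩ := hX.exists_comp_ι_eq hJ F g
  obtain ⟨s, hs⟩ := hp j
  exact ⟨y ≫ s, by rw [Category.assoc, hs]⟩

theorem mono_colimit_desc {κ : Cardinal.{v}} {P : ObjectProperty C} (hP : P.IsSeparating)
    (hpres : ∀ X, P X → IsCardPresentable κ X) {J : Type v} [SmallCategory J] [IsFiltered J]
    (hJ : IsCardFiltered κ J) {F : J ⥤ C} [HasColimit F] (c : Cocone F)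
    (hc : ∀ j, Mono (c.ι.app j)) : Mono (colimit.desc F c) := by
  refine ⟨fun u v huv => hP _ _ fun X hX g => ?_⟩
  obtain ⟨j₁, y₁, hy₁⟩ := (hpres X hX).exists_comp_ι_eq hJ F (g ≫ u)
  obtain ⟨j₂, y₂, hy₂⟩ := (hpres X hX).exists_comp_ι_eq hJ F (g ≫ v)
  let j := IsFiltered.max j₁ j₂
  let x₁ := y₁ ≫ F.map (IsFiltered.leftToMax j₁ j₂)
  let x₂ := y₂ ≫ F.map (IsFiltered.rightToMax j₁ j₂)
  have hx₁ : x₁ ≫ colimit.ι F j = g ≫ u := by simp [x₁, j, hy₁]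
  have hx₂ : x₂ ≫ colimit.ι F j = g ≫ v := by simp [x₂, j, hy₂]
  have hx : x₁ = x₂ := (cancel_mono (c.ι.app j)).1 <| by
    rw [← colimit.ι_desc c j, ← Category.assoc, hx₁, ← Category.assoc, hx₂, Category.assoc,
      Category.assoc, huv]
  rw [← hx₁, ← hx₂, hx]

namespace DirectedColimit

variable {J : Type v} [Preorder J] (D : J ⥤ C) [HasProducts.{v} C]

noncomputable abbrev stage (j : J) : C := D.obj j ⨯ ∏ᶜ fun k : {k // ¬ j ≤ k} => D.obj k

open Classical in
noncomputable def stageProj (j k : J) : stage D j ⟶ D.obj k :=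
  if h : j ≤ k then prod.fst ≫ D.map (homOfLE h)
  else prod.snd ≫ Pi.π (fun k : {k // ¬ j ≤ k} => D.obj k) ⟨k, h⟩

noncomputable def stageToProd (j : J) : stage D j ⟶ ∏ᶜ D.obj := Pi.lift (stageProj D j)

@[simp] lemma stageProj_self (j : J) : stageProj D j j = prod.fst := by
  simp [stageProj]

instance mono_stageToProd (j : J) : Mono (stageToProd D j) where
  right_cancellation u v huv := by
    have hproj (k : J) : u ≫ stageProj D j k = v ≫ stageProj D j k := by
      simpa [stageToProd] using congrArg (· ≫ Pi.π D.obj k) huv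
    refine prod.hom_ext (by simpa using hproj j) (Pi.hom_ext _ _ fun k => ?_)
    simpa [stageProj, k.2] using hproj k

noncomputable def stageMap (j j' : J) : stage D j ⟶ stage D j' :=
  prod.lift (stageProj D j j') (Pi.lift fun k => stageProj D j k)

lemma stageMap_stageProj {j j' : J} (h : j ≤ j') (k : J) :
    stageMap D j j' ≫ stageProj D j' k = stageProj D j k := by
  by_cases hk : j' ≤ k
  · rw [stageProj, dif_pos hk, stageMap, prod.lift_fst_assoc]
    simp [stageProj, h, h.trans hk, ← D.map_comp]
  · rw [stageProj, dif_neg hk, stageMap, prod.lift_snd_assoc, Pi.lift_π]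

lemma stageMap_stageToProd {j j' : J} (h : j ≤ j') :
    stageMap D j j' ≫ stageToProd D j' = stageToProd D j :=
  Pi.hom_ext _ _ fun k => by simp [stageToProd, stageMap_stageProj D h]

noncomputable def stageFunctor : J ⥤ C where
  obj := stage D
  map {j j'} _ := stageMap D j j'
  map_id j := (cancel_mono (stageToProd D j)).1 <| by simp [stageMap_stageToProd]
  map_comp f g := (cancel_mono (stageToProd D _)).1 <| by
    simp [stageMap_stageToProd, leOfHom f, leOfHom g, (leOfHom f).trans (leOfHom g)]

noncomputable abbrev prodCocone : Cocone (stageFunctor D) where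
  pt := ∏ᶜ D.obj
  ι := { app := stageToProd D
         naturality := fun _ _ f => by simp [stageFunctor, stageMap_stageToProd D (leOfHom f)] }

variable [HasColimit D]

noncomputable abbrev colimitCocone : Cocone (stageFunctor D) where
  pt := colimit D
  ι := { app := fun j => prod.fst ≫ colimit.ι D j
         naturality := fun j j' f => by
           have := stageMap_stageProj D (leOfHom f) j'
           simp only [stageProj_self] at this
           simp [stageFunctor, reassoc_of% this, stageProj, leOfHom f] }

theorem isPureEpi_desc_colimitCocone {κ : Cardinal.{v}} (hJ : IsCardFiltered κ J)
    (hD : ∀ j k, ¬ j ≤ k → Nonempty (D.obj j ⟶ D.obj k)) [HasColimit (stageFunctor D)] :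
    IsPureEpi κ (colimit.desc _ (colimitCocone D)) := by
  refine isPureEpi_of_forall_exists_comp_eq hJ D _ fun j => ?_
  let s : D.obj j ⟶ (stageFunctor D).obj j :=
    prod.lift (𝟙 _) (Pi.lift fun k => (hD j k k.2).some)
  refine ⟨s ≫ colimit.ι (stageFunctor D) j, ?_⟩
  rw [Category.assoc, colimit.ι_desc]
  exact prod.lift_fst_assoc _ _ _ |>.trans (Category.id_comp _)

end DirectedColimit

open DirectedColimit in
/-- Let `C` be locally `κ`-presentable with all products and strongly
connected (there is a morphism into every non-strict-initial object).  If `P` defines a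
full subcategory closed under products, subobjects, and `κ`-pure quotients, then for every
`κ`-directed diagram of objects of `P`, none of which is strict initial, the colimit lies
in `P`; concretely, there is a subobject `A` of the product of the diagram and a `κ`-pure
epimorphism from `A` onto the colimit. -/
theorem colimit_mem_of_closed_under_pure_quotients
    (κ : Cardinal.{v}) (hκ : κ.IsRegular)
    (hC : IsLocallyPresentable κ C) [HasProducts.{v} C]
    (hconn : ∀ X Y : C, ¬ IsStrictInitial Y → Nonempty (X ⟶ Y))
    (P : C → Prop)
    (hprod : ∀ (ι : Type v) (A : ι → C), (∀ i, P (A i)) → P (∏ᶜ A))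
    (hsub : ∀ {A B : C} (m : A ⟶ B), Mono m → P B → P A)
    (hpure : ∀ {A B : C} (f : A ⟶ B), IsPureEpi κ f → P A → P B)
    (J : Type v) [Preorder J]
    (hdir : ∀ S : Set J, Cardinal.mk S < κ → ∃ j, ∀ i ∈ S, i ≤ j)
    (D : J ⥤ C) (hD : ∀ j, P (D.obj j)) (hnsi : ∀ j, ¬ IsStrictInitial (D.obj j))
    [HasColimit D] :
    P (colimit D) ∧
      ∃ (A : C) (m : A ⟶ ∏ᶜ D.obj) (p : A ⟶ colimit D), Mono m ∧ IsPureEpi κ p := by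
  have := hC.1
  obtain ⟨S, hsep, hpres⟩ := hC.exists_isSeparating
  have hJ : IsCardFiltered κ J := isCardFiltered_of_forall_bddAbove hdir
  have := isFiltered_of_forall_bddAbove hκ.aleph0_le hdir
  have hm : Mono (colimit.desc _ (prodCocone D)) :=
    mono_colimit_desc hsep hpres hJ _ (mono_stageToProd D)
  have hp : IsPureEpi κ (colimit.desc _ (colimitCocone D)) :=
    isPureEpi_desc_colimitCocone D hJ fun j k _ => hconn _ _ (hnsi k)
  exact ⟨hpure _ hp (hsub _ hm (hprod J D.obj hD)), _, _, _, hm, hp⟩
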